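/- arXiv:2311.00473 — 2 statements merged into one kernel-verified Lean document; each statement's English description precedes it below -/
import Mathlib

section
/- The harmonic product * is commutative and associative on H¹ and has unit 1; in other words, (H¹, *) is a commutative associative unital ℚ-algebra. -/
/- STATEMENT 3: the harmonic product is commutative and associative on H¹ with unit 1. -/

noncomputable section

abbrev H : Type := FreeAlgebra ℚ (Fin 2)

def e0 : H := FreeAlgebra.ι ℚ 0
def e1 : H := FreeAlgebra.ι ℚ 1

/-- `e_{(m)} = e₁ e₀^{m-1}`. -/
def eE (m : ℕ+) : H := e1 * e0 ^ ((m : ℕ) - 1)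

/-- `e_k` for an index `k`. -/
def eIdx : List ℕ+ → H
  | [] => 1
  | m :: ks => eE m * eIdx ks

/-- `H¹`, the span of the `e_k`. -/
def H1 : Submodule ℚ H := Submodule.span ℚ (Set.range eIdx)

/-! ### Auxiliary definitions and lemmas -/

lemma eIdx_concat (k : List ℕ+) (b : ℕ+) : eIdx (k ++ [b]) = eIdx k * eE b := by
  induction k with
  | nil => simp [eIdx]
  | cons a t ih =>
    show eE a * eIdx (t ++ [b]) = eE a * eIdx t * eE b
    rw [ih, mul_assoc]

/-- Span of the `e_k` with `k` of length at most `n`. -/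
def H1n (n : ℕ) : Submodule ℚ H :=
  Submodule.span ℚ (eIdx '' {k | k.length ≤ n})

lemma eIdx_mem_H1n {k : List ℕ+} {n : ℕ} (h : k.length ≤ n) : eIdx k ∈ H1n n :=
  Submodule.subset_span ⟨k, h, rfl⟩

lemma eIdx_mem_H1 (k : List ℕ+) : eIdx k ∈ H1 :=
  Submodule.subset_span ⟨k, rfl⟩

lemma H1n_le_H1 (n : ℕ) : H1n n ≤ H1 :=
  Submodule.span_mono (by rintro _ ⟨k, -, rfl⟩; exact ⟨k, rfl⟩)

lemma mulE_mem {n : ℕ} {u : H} (hu : u ∈ H1n n) (b : ℕ+) : u * eE b ∈ H1n (n + 1) := by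
  induction hu using Submodule.span_induction with
  | mem x hx =>
    obtain ⟨k, hk, rfl⟩ := hx
    rw [← eIdx_concat]
    exact eIdx_mem_H1n (by simpa using Nat.succ_le_succ hk)
  | zero => simpa using zero_mem _
  | add x y _ _ hx hy => rw [add_mul]; exact add_mem hx hy
  | smul c x _ hx => rw [smul_mul_assoc]; exact Submodule.smul_mem _ _ hx

lemma mulE_mem_H1 {u : H} (hu : u ∈ H1) (b : ℕ+) : u * eE b ∈ H1 := by
  induction hu using Submodule.span_induction with
  | mem x hx =>
    obtain ⟨k, rfl⟩ := hx
    rw [← eIdx_concat]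
    exact eIdx_mem_H1 _
  | zero => simpa using zero_mem _
  | add x y _ _ hx hy => rw [add_mul]; exact add_mem hx hy
  | smul c x _ hx => rw [smul_mul_assoc]; exact Submodule.smul_mem _ _ hx

section Mul

variable (mul : H →ₗ[ℚ] H →ₗ[ℚ] H)
  (hOneL : ∀ l : List ℕ+, mul (eIdx []) (eIdx l) = eIdx l)
  (hOneR : ∀ k : List ℕ+, mul (eIdx k) (eIdx []) = eIdx k)
  (hRec : ∀ (k l : List ℕ+) (a b : ℕ+),
      mul (eIdx (k ++ [a])) (eIdx (l ++ [b])) =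
        mul (eIdx (k ++ [a])) (eIdx l) * eE b
        + mul (eIdx k) (eIdx (l ++ [b])) * eE a
        - mul (eIdx k) (eIdx l) * eE (a + b))

include hOneL in
lemma one_mul' {u : H} (hu : u ∈ H1) : mul (eIdx []) u = u := by
  induction hu using Submodule.span_induction with
  | mem x hx => obtain ⟨k, rfl⟩ := hx; exact hOneL k
  | zero => simp
  | add x y _ _ hx hy => rw [map_add, hx, hy]
  | smul c x _ hx => rw [map_smul, hx]

include hOneR in
lemma mul_one' {u : H} (hu : u ∈ H1) : mul u (eIdx []) = u := by
  induction hu using Submodule.span_induction with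
  | mem x hx => obtain ⟨k, rfl⟩ := hx; exact hOneR k
  | zero => simp
  | add x y _ _ hx hy => rw [map_add, LinearMap.add_apply, hx, hy]
  | smul c x _ hx => rw [map_smul, LinearMap.smul_apply, hx]

include hRec in
/-- The recursion extended by bilinearity to all of `H1`. -/
lemma lboth {u v : H} (hu : u ∈ H1) (hv : v ∈ H1) (a b : ℕ+) :
    mul (u * eE a) (v * eE b) =
      mul (u * eE a) v * eE b + mul u (v * eE b) * eE a - mul u v * eE (a + b) := by
  induction hu, hv using Submodule.span_induction₂ with
  | mem_mem x y hx hy =>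
    obtain ⟨k, rfl⟩ := hx
    obtain ⟨l, rfl⟩ := hy
    simpa only [eIdx_concat] using hRec k l a b
  | zero_left y hy => simp
  | zero_right x hx => simp
  | add_left x y z hx hy hz h1 h2 =>
    simp only [add_mul, map_add, LinearMap.add_apply, h1, h2]
    abel
  | add_right x y z hx hy hz h1 h2 =>
    simp only [add_mul, map_add, LinearMap.add_apply, h1, h2]
    abel
  | smul_left c x y hx hy h1 =>
    simp only [smul_mul_assoc, map_smul, LinearMap.smul_apply, h1, smul_add, smul_sub]
  | smul_right c x y hx hy h1 =>
    simp only [smul_mul_assoc, map_smul, LinearMap.smul_apply, h1, smul_add, smul_sub]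

include hOneL hOneR hRec in
lemma memB : ∀ n (k l : List ℕ+), k.length + l.length ≤ n →
    mul (eIdx k) (eIdx l) ∈ H1n n := by
  intro n
  induction n with
  | zero =>
    intro k l h
    have hk : k = [] := List.length_eq_zero_iff.mp (by omega)
    have hl : l = [] := List.length_eq_zero_iff.mp (by omega)
    subst hk; subst hl
    rw [hOneR []]
    exact eIdx_mem_H1n (by simp)
  | succ n ih =>
    intro k l h
    rcases List.eq_nil_or_concat' k with rfl | ⟨k', a, rfl⟩
    · rw [hOneL l]
      exact eIdx_mem_H1n (by simpa using h)
    rcases List.eq_nil_or_concat' l with rfl | ⟨l', b, rfl⟩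
    · rw [hOneR]
      exact eIdx_mem_H1n (by simp at h ⊢; omega)
    simp only [List.length_append, List.length_singleton] at h
    rw [hRec k' l' a b]
    refine sub_mem (add_mem ?_ ?_) ?_
    · exact mulE_mem (ih _ _ (by simp; omega)) b
    · exact mulE_mem (ih _ _ (by simp; omega)) a
    · exact mulE_mem (Submodule.span_mono (by intro x hx; exact hx) (ih k' l' (by omega))) (a + b)

include hOneL hOneR hRec in
lemma mulH1 {u v : H} (hu : u ∈ H1) (hv : v ∈ H1) : mul u v ∈ H1 := by
  induction hu, hv using Submodule.span_induction₂ with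
  | mem_mem x y hx hy =>
    obtain ⟨k, rfl⟩ := hx
    obtain ⟨l, rfl⟩ := hy
    exact H1n_le_H1 _ (memB mul hOneL hOneR hRec (k.length + l.length) k l le_rfl)
  | zero_left y hy => simp
  | zero_right x hx => simp
  | add_left x y z hx hy hz h1 h2 =>
    rw [map_add, LinearMap.add_apply]; exact add_mem h1 h2
  | add_right x y z hx hy hz h1 h2 =>
    rw [map_add]; exact add_mem h1 h2
  | smul_left c x y hx hy h1 =>
    rw [map_smul, LinearMap.smul_apply]; exact Submodule.smul_mem _ _ h1
  | smul_right c x y hx hy h1 =>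
    rw [map_smul]; exact Submodule.smul_mem _ _ h1

include hOneL hOneR hRec in
lemma commB : ∀ n (k l : List ℕ+), k.length + l.length ≤ n →
    mul (eIdx k) (eIdx l) = mul (eIdx l) (eIdx k) := by
  intro n
  induction n with
  | zero =>
    intro k l h
    have hk : k = [] := List.length_eq_zero_iff.mp (by omega)
    have hl : l = [] := List.length_eq_zero_iff.mp (by omega)
    subst hk; subst hl; rfl
  | succ n ih =>
    intro k l h
    rcases List.eq_nil_or_concat' k with rfl | ⟨k', a, rfl⟩
    · rw [hOneL l, hOneR l]
    rcases List.eq_nil_or_concat' l with rfl | ⟨l', b, rfl⟩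
    · rw [hOneL, hOneR]
    simp only [List.length_append, List.length_singleton] at h
    rw [hRec k' l' a b, hRec l' k' b a,
      ih (k' ++ [a]) l' (by simp; omega),
      ih k' (l' ++ [b]) (by simp; omega),
      ih k' l' (by omega), add_comm b a]
    abel

include hOneL hOneR hRec in
lemma commH1 {u v : H} (hu : u ∈ H1) (hv : v ∈ H1) : mul u v = mul v u := by
  induction hu, hv using Submodule.span_induction₂ with
  | mem_mem x y hx hy =>
    obtain ⟨k, rfl⟩ := hx
    obtain ⟨l, rfl⟩ := hy
    exact commB mul hOneL hOneR hRec (k.length + l.length) k l le_rfl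
  | zero_left y hy => simp
  | zero_right x hx => simp
  | add_left x y z hx hy hz h1 h2 =>
    simp only [map_add, LinearMap.add_apply, h1, h2]
  | add_right x y z hx hy hz h1 h2 =>
    simp only [map_add, LinearMap.add_apply, h1, h2]
  | smul_left c x y hx hy h1 =>
    simp only [map_smul, LinearMap.smul_apply, h1]
  | smul_right c x y hx hy h1 =>
    simp only [map_smul, LinearMap.smul_apply, h1]

/-- Extension of associativity from spanning sets by trilinearity. -/
lemma triext {s t r : Set H}
    (h : ∀ x ∈ s, ∀ y ∈ t, ∀ z ∈ r, mul (mul x y) z = mul x (mul y z)) :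
    ∀ u ∈ Submodule.span ℚ s, ∀ v ∈ Submodule.span ℚ t, ∀ w ∈ Submodule.span ℚ r,
      mul (mul u v) w = mul u (mul v w) := by
  intro u hu v hv w hw
  induction hu using Submodule.span_induction with
  | mem x hx =>
    induction hv using Submodule.span_induction with
    | mem y hy =>
      induction hw using Submodule.span_induction with
      | mem z hz => exact h x hx y hy z hz
      | zero => simp
      | add z₁ z₂ _ _ h1 h2 => simp only [map_add, h1, h2]
      | smul c z _ h1 => simp only [map_smul, h1]
    | zero => simp
    | add y₁ y₂ _ _ h1 h2 =>
      simp only [map_add, LinearMap.add_apply, h1, h2]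
    | smul c y _ h1 =>
      simp only [map_smul, LinearMap.smul_apply, h1]
  | zero => simp
  | add x₁ x₂ _ _ h1 h2 =>
    simp only [map_add, LinearMap.add_apply, h1, h2]
  | smul c x _ h1 =>
    simp only [map_smul, LinearMap.smul_apply, h1]

include hOneL hOneR hRec in
lemma assocG : ∀ n p q r, p + q + r ≤ n → ∀ u ∈ H1n p, ∀ v ∈ H1n q, ∀ w ∈ H1n r,
    mul (mul u v) w = mul u (mul v w) := by
  intro n
  induction n using Nat.strong_induction_on with
  | _ n ihn =>
  intro p q r hn
  apply triext
  rintro _ ⟨j, hj, rfl⟩ _ ⟨k, hk, rfl⟩ _ ⟨l, hl, rfl⟩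
  simp only [Set.mem_setOf_eq] at hj hk hl
  rcases List.eq_nil_or_concat' j with rfl | ⟨j', a, rfl⟩
  · rw [hOneL k, one_mul' mul hOneL
      (mulH1 mul hOneL hOneR hRec (eIdx_mem_H1 k) (eIdx_mem_H1 l))]
  rcases List.eq_nil_or_concat' k with rfl | ⟨k', b, rfl⟩
  · rw [mul_one' mul hOneR (eIdx_mem_H1 _), hOneL l]
  rcases List.eq_nil_or_concat' l with rfl | ⟨l', c, rfl⟩
  · rw [mul_one' mul hOneR
      (mulH1 mul hOneL hOneR hRec (eIdx_mem_H1 _) (eIdx_mem_H1 _)),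
      mul_one' mul hOneR (eIdx_mem_H1 _)]
  -- the main case : all three indices nonempty
  simp only [List.length_append, List.length_singleton] at hj hk hl
  rw [eIdx_concat j' a, eIdx_concat k' b, eIdx_concat l' c]
  set x := eIdx j' with hxdef
  set v := eIdx k' with hvdef
  set w := eIdx l' with hwdef
  have hx : x ∈ H1n j'.length := eIdx_mem_H1n le_rfl
  have hv : v ∈ H1n k'.length := eIdx_mem_H1n le_rfl
  have hw : w ∈ H1n l'.length := eIdx_mem_H1n le_rfl
  have hx1 : x ∈ H1 := eIdx_mem_H1 j'
  have hv1 : v ∈ H1 := eIdx_mem_H1 k'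
  have hw1 : w ∈ H1 := eIdx_mem_H1 l'
  have hxa1 : x * eE a ∈ H1 := mulE_mem_H1 hx1 a
  have hvb1 : v * eE b ∈ H1 := mulE_mem_H1 hv1 b
  have hwc1 : w * eE c ∈ H1 := mulE_mem_H1 hw1 c
  have hA : mul (x * eE a) v ∈ H1 := mulH1 mul hOneL hOneR hRec hxa1 hv1
  have hB : mul x (v * eE b) ∈ H1 := mulH1 mul hOneL hOneR hRec hx1 hvb1
  have hC : mul x v ∈ H1 := mulH1 mul hOneL hOneR hRec hx1 hv1
  have hD : mul (v * eE b) w ∈ H1 := mulH1 mul hOneL hOneR hRec hvb1 hw1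
  have hE : mul v (w * eE c) ∈ H1 := mulH1 mul hOneL hOneR hRec hv1 hwc1
  have hF : mul v w ∈ H1 := mulH1 mul hOneL hOneR hRec hv1 hw1
  have hlt : n - 1 < n := by omega
  have ih := ihn (n - 1) hlt
  have i1 : mul (mul (x * eE a) (v * eE b)) w = mul (x * eE a) (mul (v * eE b) w) :=
    ih (j'.length + 1) (k'.length + 1) l'.length (by omega)
      _ (mulE_mem hx a) _ (mulE_mem hv b) _ hw
  have i2 : mul (mul (x * eE a) v) (w * eE c) = mul (x * eE a) (mul v (w * eE c)) :=
    ih (j'.length + 1) k'.length (l'.length + 1) (by omega)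
      _ (mulE_mem hx a) _ hv _ (mulE_mem hw c)
  have i3 : mul (mul x (v * eE b)) (w * eE c) = mul x (mul (v * eE b) (w * eE c)) :=
    ih j'.length (k'.length + 1) (l'.length + 1) (by omega)
      _ hx _ (mulE_mem hv b) _ (mulE_mem hw c)
  have i4 : mul (mul (x * eE a) v) w = mul (x * eE a) (mul v w) :=
    ih (j'.length + 1) k'.length l'.length (by omega) _ (mulE_mem hx a) _ hv _ hw
  have i5 : mul (mul x (v * eE b)) w = mul x (mul (v * eE b) w) :=
    ih j'.length (k'.length + 1) l'.length (by omega) _ hx _ (mulE_mem hv b) _ hw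
  have i6 : mul (mul x v) (w * eE c) = mul x (mul v (w * eE c)) :=
    ih j'.length k'.length (l'.length + 1) (by omega) _ hx _ hv _ (mulE_mem hw c)
  have i7 : mul (mul x v) w = mul x (mul v w) :=
    ih j'.length k'.length l'.length (by omega) _ hx _ hv _ hw
  have hXY := lboth mul hRec hx1 hv1 a b
  have hYZ := lboth mul hRec hv1 hw1 b c
  rw [hXY, hYZ]
  simp only [map_add, map_sub, LinearMap.add_apply, LinearMap.sub_apply]
  rw [lboth mul hRec hA hw1 b c, lboth mul hRec hB hw1 a c,
    lboth mul hRec hC hw1 (a + b) c,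
    lboth mul hRec hx1 hD a c, lboth mul hRec hx1 hE a b,
    lboth mul hRec hx1 hF a (b + c)]
  rw [i2, i3, i4, i5, i6, i7]
  rw [hYZ]
  rw [← i1, hXY]
  simp only [map_add, map_sub, LinearMap.add_apply, LinearMap.sub_apply, add_mul, sub_mul,
    add_assoc a b c]
  abel

end Mul

theorem stmt_3
    (mul : H →ₗ[ℚ] H →ₗ[ℚ] H)
    (hOneL : ∀ l : List ℕ+, mul (eIdx []) (eIdx l) = eIdx l)
    (hOneR : ∀ k : List ℕ+, mul (eIdx k) (eIdx []) = eIdx k)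
    (hRec : ∀ (k l : List ℕ+) (a b : ℕ+),
      mul (eIdx (k ++ [a])) (eIdx (l ++ [b])) =
        mul (eIdx (k ++ [a])) (eIdx l) * eE b
        + mul (eIdx k) (eIdx (l ++ [b])) * eE a
        - mul (eIdx k) (eIdx l) * eE (a + b)) :
    (∀ u ∈ H1, ∀ v ∈ H1, mul u v ∈ H1) ∧
    (∀ u ∈ H1, ∀ v ∈ H1, mul u v = mul v u) ∧
    (∀ u ∈ H1, ∀ v ∈ H1, ∀ w ∈ H1, mul (mul u v) w = mul u (mul v w)) ∧
    (∀ u ∈ H1, mul 1 u = u ∧ mul u 1 = u) := by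
  refine ⟨fun u hu v hv => mulH1 mul hOneL hOneR hRec hu hv,
    fun u hu v hv => commH1 mul hOneL hOneR hRec hu hv, ?_, ?_⟩
  · apply triext mul
    rintro _ ⟨j, rfl⟩ _ ⟨k, rfl⟩ _ ⟨l, rfl⟩
    exact assocG mul hOneL hOneR hRec (j.length + k.length + l.length)
      j.length k.length l.length le_rfl _ (eIdx_mem_H1n le_rfl)
      _ (eIdx_mem_H1n le_rfl) _ (eIdx_mem_H1n le_rfl)
  · intro u hu
    exact ⟨one_mul' mul hOneL hu, mul_one' mul hOneR hu⟩
end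
end

section
/- For every word w = e_{a₁}⋯e_{a_N} with a₁,…,a_N ∈ {0,1}, the following identity holds in H[[s,t]]: ∑_{v=0}^{N} (−1)^v ((1+e₀t)^{−1}·e₁·e_{a₁}⋯e_{a_v}) ⧢ ((1−e₀s)^{−1}·e₁·e_{a_N}⋯e_{a_{v+1}}) = (1+e₀t)^{−1} ⧢ ((1−e₀s)^{−1}·e₁·(e_{a_N}⋯e_{a₁})·e₁·(1−e₀t)^{−1}) + (−1)^N (1−e₀s)^{−1} ⧢ ((1+e₀t)^{−1}·e₁·(e_{a₁}⋯e_{a_N})·e₁·(1+e₀s)^{−1}). -/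
/- STATEMENT 6: the telescoping shuffle identity in H[[s,t]] (Lemma on shuffle, used for
the (s,t)-adic duality): for every word w = e_{a₁}⋯e_{a_N},
∑_{v=0}^{N} (-1)^v ((1+e₀t)⁻¹ e₁ e_{a₁}⋯e_{a_v}) ⧢ ((1-e₀s)⁻¹ e₁ e_{a_N}⋯e_{a_{v+1}})
 = (1+e₀t)⁻¹ ⧢ ((1-e₀s)⁻¹ e₁ ←w e₁ (1-e₀t)⁻¹)
 + (-1)^N (1-e₀s)⁻¹ ⧢ ((1+e₀t)⁻¹ e₁ w e₁ (1+e₀s)⁻¹).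
We realize H[[s,t]] as H[[t]][[s]] (inner variable t, outer variable s). -/

noncomputable section

/-- The word `e_{a₁}⋯e_{a_N}` of a list of letters. -/
def word (l : List (Fin 2)) : H := (l.map (FreeAlgebra.ι ℚ)).prod

/-- `H[[t]]`. -/
abbrev HT : Type := PowerSeries H
/-- `H[[s,t]] = H[[t]][[s]]`. -/
abbrev HST : Type := PowerSeries HT

/-- Embedding of `H` into `H[[s,t]]`. -/
def embB (x : H) : HST := PowerSeries.C (PowerSeries.C x)

/-- Coefficientwise (Cauchy) extension of a bilinear product on `H` to `H[[t]]`. -/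
def extT (sh : H →ₗ[ℚ] H →ₗ[ℚ] H) (f g : HT) : HT :=
  PowerSeries.mk fun n => ∑ p ∈ Finset.HasAntidiagonal.antidiagonal n,
    sh (PowerSeries.coeff p.1 f) (PowerSeries.coeff p.2 g)

/-- Coefficientwise (Cauchy) extension of a bilinear product on `H` to `H[[s,t]]`. -/
def extST (sh : H →ₗ[ℚ] H →ₗ[ℚ] H) (f g : HST) : HST :=
  PowerSeries.mk fun n => ∑ p ∈ Finset.HasAntidiagonal.antidiagonal n,
    extT sh (PowerSeries.coeff p.1 f) (PowerSeries.coeff p.2 g)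

/-- `(1 + e₀ t)⁻¹ = ∑_n (-1)ⁿ e₀ⁿ tⁿ` in `H[[s,t]]`. -/
def invOnePlusE0T : HST := PowerSeries.C (PowerSeries.mk fun n => (-1 : H) ^ n * e0 ^ n)
/-- `(1 - e₀ t)⁻¹ = ∑_n e₀ⁿ tⁿ` in `H[[s,t]]`. -/
def invOneMinusE0T : HST := PowerSeries.C (PowerSeries.mk fun n => e0 ^ n)
/-- `(1 - e₀ s)⁻¹ = ∑_n e₀ⁿ sⁿ` in `H[[s,t]]`. -/
def invOneMinusE0S : HST := PowerSeries.mk fun n => PowerSeries.C (e0 ^ n)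
/-- `(1 + e₀ s)⁻¹ = ∑_n (-1)ⁿ e₀ⁿ sⁿ` in `H[[s,t]]`. -/
def invOnePlusE0S : HST := PowerSeries.mk fun n => PowerSeries.C ((-1 : H) ^ n * e0 ^ n)

/-! Write `A = (1+e₀t)⁻¹` and `B = (1-e₀s)⁻¹`. The shuffle recursion
`(x a) ⧢ (y b) = ((x a) ⧢ y) b + (x ⧢ (y b)) a` splits the `v`-th summand into two pieces, the
second of which is the first piece of the `(v+1)`-st, so the alternating sum telescopes to
`(A ⧢ B e₁ ←w) e₁ + (-1)ᴺ (A e₁ w ⧢ B) e₁`.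

For the right-hand side, let `P = (1 + e₀u)⁻¹` where `u` is central and `F ⧢ (G u) = (F ⧢ G) u`.
Expanding `P = 1 - P e₀ u` gives `P ⧢ (Z e_j) = (P ⧢ Z) e_j P`, and then
`P ⧢ (Z (1 - e₀u)⁻¹) = (P ⧢ Z) (1 + e₀u)`; together `P ⧢ (Z e_j (1 - e₀u)⁻¹) = (P ⧢ Z) e_j`.
This is used with `u = t` and `u = -s`. -/

open PowerSeries FreeAlgebra Finset

namespace PowerSeries

variable {R : Type*} [Ring R]

theorem mk_pow_mul_one_sub_C_mul_X (a : R) : mk (a ^ ·) * (1 - C a * X) = 1 := by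
  ext (_ | n) <;> simp [mul_sub, ← mul_assoc, coeff_succ_mul_X, coeff_mul_C, pow_succ]

theorem one_sub_C_mul_X_mul_mk_pow (a : R) : (1 - C a * X) * mk (a ^ ·) = 1 := by
  ext (_ | n) <;>
    simp [sub_mul, mul_assoc, ← (commute_X _).eq, coeff_succ_mul_X, coeff_C_mul, pow_succ']

theorem mk_neg_one_pow_mul_pow (a : R) : mk (fun n => (-1) ^ n * a ^ n) = mk ((-a) ^ ·) :=
  congrArg mk (funext fun n => (neg_pow a n).symm)

theorem commute_C_of_forall_commute {a : R} (h : ∀ r, Commute a r) (φ : R⟦X⟧) :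
    Commute (C a) φ := by
  ext n
  simp [coeff_mul_C, (h _).eq]

variable (op : R → R → R)

def cauchyExt (f g : R⟦X⟧) : R⟦X⟧ :=
  mk fun n => ∑ p ∈ antidiagonal n, op (coeff p.1 f) (coeff p.2 g)

@[simp] theorem coeff_cauchyExt (n : ℕ) (f g : R⟦X⟧) :
    coeff n (cauchyExt op f g) = ∑ p ∈ antidiagonal n, op (coeff p.1 f) (coeff p.2 g) :=
  coeff_mk _ _

variable {op}

theorem cauchyExt_comm (h : ∀ x y, op x y = op y x) (f g : R⟦X⟧) :
    cauchyExt op f g = cauchyExt op g f := by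
  ext n
  rw [coeff_cauchyExt, coeff_cauchyExt, ← Nat.sum_antidiagonal_swap]
  simp [h]

theorem cauchyExt_add_left (h : ∀ x x' y, op (x + x') y = op x y + op x' y) (f f' g : R⟦X⟧) :
    cauchyExt op (f + f') g = cauchyExt op f g + cauchyExt op f' g := by
  ext n
  simp [h, sum_add_distrib]

theorem cauchyExt_add_right (h : ∀ x y y', op x (y + y') = op x y + op x y') (f g g' : R⟦X⟧) :
    cauchyExt op f (g + g') = cauchyExt op f g + cauchyExt op f g' := by
  ext n
  simp [h, sum_add_distrib]

theorem cauchyExt_zero_left (h : ∀ y, op 0 y = 0) (g : R⟦X⟧) : cauchyExt op 0 g = 0 := by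
  ext n
  simp [h]

theorem cauchyExt_zero_right (h : ∀ x, op x 0 = 0) (f : R⟦X⟧) : cauchyExt op f 0 = 0 := by
  ext n
  simp [h]

theorem cauchyExt_one_left (h₀ : ∀ y, op 0 y = 0) (h₁ : ∀ y, op 1 y = y) (g : R⟦X⟧) :
    cauchyExt op 1 g = g := by
  ext n
  rw [coeff_cauchyExt, Nat.sum_antidiagonal_eq_sum_range_succ_mk, sum_range_succ']
  simp [coeff_one, h₀, h₁]

theorem cauchyExt_mul_X_right (h : ∀ x, op x 0 = 0) (f g : R⟦X⟧) :
    cauchyExt op f (g * X) = cauchyExt op f g * X := by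
  ext (_ | n)
  · simp [h]
  · rw [coeff_cauchyExt, coeff_succ_mul_X, coeff_cauchyExt, Nat.sum_antidiagonal_succ']
    simp [h, coeff_succ_mul_X]

theorem cauchyExt_mul_C_right {c : R} (h : ∀ x y, op x (y * c) = op x y * c) (f g : R⟦X⟧) :
    cauchyExt op f (g * C c) = cauchyExt op f g * C c := by
  ext n
  simp [coeff_mul_C, h, sum_mul]

theorem cauchyExt_mul_C_mul_C {c d : R}
    (h : ∀ x y, op (x * c) (y * d) = op (x * c) y * d + op x (y * d) * c) (f g : R⟦X⟧) :
    cauchyExt op (f * C c) (g * C d) =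
      cauchyExt op (f * C c) g * C d + cauchyExt op f (g * C d) * C c := by
  ext n
  simp [coeff_mul_C, h, sum_mul, sum_add_distrib]

end PowerSeries

theorem word_nil : word [] = 1 := rfl

theorem word_cons (i : Fin 2) (l : List (Fin 2)) : word (i :: l) = ι ℚ i * word l := by
  simp [word]

theorem word_append_singleton (l : List (Fin 2)) (i : Fin 2) :
    word (l ++ [i]) = word l * ι ℚ i := by
  simp [word]

theorem basisFreeMonoid_ofList (l : List (Fin 2)) :
    basisFreeMonoid ℚ (Fin 2) (FreeMonoid.ofList l) = word l := by
  simp [basisFreeMonoid, ← MonoidAlgebra.of_apply, equivMonoidAlgebraFreeMonoid,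
    MonoidAlgebra.lift_of, FreeMonoid.lift_apply, word]

theorem linearMap_ext_word {f g : H →ₗ[ℚ] H} (h : ∀ l, f (word l) = g (word l)) : f = g :=
  (basisFreeMonoid ℚ (Fin 2)).ext fun w => by
    simpa [← basisFreeMonoid_ofList] using h w.toList

theorem linearMap_ext_word₂ {B B' : H →ₗ[ℚ] H →ₗ[ℚ] H}
    (h : ∀ l l', B (word l) (word l') = B' (word l) (word l')) : B = B' :=
  LinearMap.ext_basis (basisFreeMonoid ℚ (Fin 2)) (basisFreeMonoid ℚ (Fin 2)) fun w w' => by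
    simpa [← basisFreeMonoid_ofList] using h w.toList w'.toList

structure IsShuffle (sh : H →ₗ[ℚ] H →ₗ[ℚ] H) : Prop where
  one_left : ∀ u, sh 1 u = u
  comm : ∀ u v, sh u v = sh v u
  mul_ι_mul_ι : ∀ u v (i j : Fin 2),
    sh (u * ι ℚ i) (v * ι ℚ j) = sh (u * ι ℚ i) v * ι ℚ j + sh u (v * ι ℚ j) * ι ℚ i

section Words

variable {sh : H →ₗ[ℚ] H →ₗ[ℚ] H}
  (hOneL : ∀ l : List (Fin 2), sh (word []) (word l) = word l)
  (hOneR : ∀ l : List (Fin 2), sh (word l) (word []) = word l)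
  (hRec : ∀ (l l' : List (Fin 2)) (i j : Fin 2),
      sh (word (l ++ [i])) (word (l' ++ [j])) =
        sh (word (l ++ [i])) (word l') * ι ℚ j + sh (word l) (word (l' ++ [j])) * ι ℚ i)
include hOneL hOneR hRec

theorem shuffle_word_comm (l l' : List (Fin 2)) :
    sh (word l) (word l') = sh (word l') (word l) := by
  induction l using List.reverseRecOn generalizing l' with
  | nil => rw [hOneL, hOneR]
  | append_singleton a i iha =>
    induction l' using List.reverseRecOn with
    | nil => rw [hOneL, hOneR]
    | append_singleton b j ihb => rw [hRec, hRec, ihb, iha, add_comm]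

theorem IsShuffle.of_words : IsShuffle sh where
  one_left u := by
    rw [linearMap_ext_word (f := sh 1) (g := LinearMap.id) fun l => hOneL l, LinearMap.id_apply]
  comm u v := LinearMap.congr_fun₂
    (linearMap_ext_word₂ (B := sh) (B' := sh.flip) (shuffle_word_comm hOneL hOneR hRec)) u v
  mul_ι_mul_ι u v i j := by
    have := linearMap_ext_word₂
      (B := sh.compl₁₂ (LinearMap.mulRight ℚ (ι ℚ i)) (LinearMap.mulRight ℚ (ι ℚ j)))
      (B' := (sh.compl₁₂ (LinearMap.mulRight ℚ (ι ℚ i)) LinearMap.id).compr₂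
          (LinearMap.mulRight ℚ (ι ℚ j)) +
        (sh.compl₁₂ LinearMap.id (LinearMap.mulRight ℚ (ι ℚ j))).compr₂
          (LinearMap.mulRight ℚ (ι ℚ i)))
      fun l l' => by simpa [word_append_singleton] using hRec l l' i j
    simpa using LinearMap.congr_fun₂ this u v

end Words

theorem embB_one : embB 1 = 1 := by simp [embB]

theorem embB_mul (x y : H) : embB (x * y) = embB x * embB y := by simp [embB]

section Extension

variable (sh : H →ₗ[ℚ] H →ₗ[ℚ] H)

theorem extT_eq_cauchyExt : extT sh = cauchyExt fun x y => sh x y := rfl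

theorem extST_eq_cauchyExt : extST sh = cauchyExt (extT sh) := rfl

theorem extT_zero_left (g : HT) : extT sh 0 g = 0 := by
  rw [extT_eq_cauchyExt]
  exact cauchyExt_zero_left (by simp) g

theorem extT_zero_right (f : HT) : extT sh f 0 = 0 := by
  rw [extT_eq_cauchyExt]
  exact cauchyExt_zero_right (by simp) f

theorem extT_add_left (f f' g : HT) : extT sh (f + f') g = extT sh f g + extT sh f' g := by
  rw [extT_eq_cauchyExt]
  exact cauchyExt_add_left (by simp) f f' g

theorem extT_add_right (f g g' : HT) : extT sh f (g + g') = extT sh f g + extT sh f g' := by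
  rw [extT_eq_cauchyExt]
  exact cauchyExt_add_right (by simp) f g g'

theorem extT_mul_X_right (f g : HT) : extT sh f (g * X) = extT sh f g * X := by
  rw [extT_eq_cauchyExt]
  exact cauchyExt_mul_X_right (by simp) f g

theorem extST_add_left (F F' G : HST) : extST sh (F + F') G = extST sh F G + extST sh F' G := by
  rw [extST_eq_cauchyExt]
  exact cauchyExt_add_left (extT_add_left sh) F F' G

theorem extST_add_right (F G G' : HST) : extST sh F (G + G') = extST sh F G + extST sh F G' := by
  rw [extST_eq_cauchyExt]
  exact cauchyExt_add_right (extT_add_right sh) F G G'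

theorem extST_sub_left (F F' G : HST) : extST sh (F - F') G = extST sh F G - extST sh F' G :=
  (AddMonoidHom.mk' (extST sh · G) fun F F' => extST_add_left sh F F' G).map_sub F F'

theorem extST_neg_right (F G : HST) : extST sh F (-G) = -extST sh F G :=
  (AddMonoidHom.mk' (extST sh F) (extST_add_right sh F)).map_neg G

theorem extST_mul_X_right (F G : HST) : extST sh F (G * X) = extST sh F G * X := by
  rw [extST_eq_cauchyExt]
  exact cauchyExt_mul_X_right (extT_zero_right sh) F G

theorem extST_mul_neg_X_right (F G : HST) : extST sh F (G * -X) = extST sh F G * -X := by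
  rw [mul_neg, extST_neg_right, extST_mul_X_right, mul_neg]

theorem extST_mul_C_X_right (F G : HST) : extST sh F (G * C X) = extST sh F G * C X := by
  rw [extST_eq_cauchyExt]
  exact cauchyExt_mul_C_right (extT_mul_X_right sh) F G

end Extension

namespace IsShuffle

variable {sh : H →ₗ[ℚ] H →ₗ[ℚ] H} (hsh : IsShuffle sh)
include hsh

theorem extT_comm (f g : HT) : extT sh f g = extT sh g f := by
  rw [extT_eq_cauchyExt]
  exact cauchyExt_comm hsh.comm f g

theorem extST_comm (F G : HST) : extST sh F G = extST sh G F := by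
  rw [extST_eq_cauchyExt]
  exact cauchyExt_comm hsh.extT_comm F G

theorem extT_one_left (g : HT) : extT sh 1 g = g := by
  rw [extT_eq_cauchyExt]
  exact cauchyExt_one_left (by simp) hsh.one_left g

theorem extST_one_left (G : HST) : extST sh 1 G = G := by
  rw [extST_eq_cauchyExt]
  exact cauchyExt_one_left (extT_zero_left sh) hsh.extT_one_left G

theorem extST_mul_left_of_right {u : HST} (hu : ∀ F G, extST sh F (G * u) = extST sh F G * u)
    (F G : HST) : extST sh (F * u) G = extST sh F G * u := by
  rw [hsh.extST_comm, hu, hsh.extST_comm]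

theorem extT_mul_letter_mul_letter (f g : HT) (i j : Fin 2) :
    extT sh (f * C (ι ℚ i)) (g * C (ι ℚ j)) =
      extT sh (f * C (ι ℚ i)) g * C (ι ℚ j) + extT sh f (g * C (ι ℚ j)) * C (ι ℚ i) := by
  rw [extT_eq_cauchyExt]
  exact cauchyExt_mul_C_mul_C (hsh.mul_ι_mul_ι · · i j) f g

theorem extST_mul_letter_mul_letter (F G : HST) (i j : Fin 2) :
    extST sh (F * embB (ι ℚ i)) (G * embB (ι ℚ j)) =
      extST sh (F * embB (ι ℚ i)) G * embB (ι ℚ j)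
        + extST sh F (G * embB (ι ℚ j)) * embB (ι ℚ i) := by
  rw [extST_eq_cauchyExt]
  exact cauchyExt_mul_C_mul_C (hsh.extT_mul_letter_mul_letter · · i j) F G

end IsShuffle

namespace IsShuffle

variable {sh : H →ₗ[ℚ] H →ₗ[ℚ] H} (hsh : IsShuffle sh) {u P : HST}
  (hu : ∀ F G, extST sh F (G * u) = extST sh F G * u) (hcomm : ∀ F, Commute u F)
  (hP : P * (1 + embB (ι ℚ 0) * u) = 1) (hP' : (1 + embB (ι ℚ 0) * u) * P = 1)
include hsh hu hcomm hP hP'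

theorem extST_geom_mul_letter (Z : HST) (j : Fin 2) :
    extST sh P (Z * embB (ι ℚ j)) = extST sh P Z * embB (ι ℚ j) * P := by
  have expand (Y : HST) : extST sh P Y = Y - extST sh (P * embB (ι ℚ 0)) Y * u := by
    have hP_eq : P = 1 - P * embB (ι ℚ 0) * u := by
      rw [eq_sub_iff_add_eq, ← hP]
      noncomm_ring
    conv_lhs => rw [hP_eq]
    rw [extST_sub_left, hsh.extST_one_left, hsh.extST_mul_left_of_right hu]
  have hT := expand Z
  have hW := expand (Z * embB (ι ℚ j))
  rw [hsh.extST_mul_letter_mul_letter] at hW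
  generalize extST sh P (Z * embB (ι ℚ j)) = W at hW ⊢
  generalize extST sh (P * embB (ι ℚ 0)) Z = T at hT hW
  generalize embB (ι ℚ j) = E at hW ⊢
  generalize embB (ι ℚ 0) = e at hW hP'
  have key : W + W * e * u = extST sh P Z * E :=
    calc W + W * e * u = Z * E - (T * E + W * e) * u + W * e * u := by rw [← hW]
      _ = Z * E - T * (E * u) := by noncomm_ring
      _ = Z * E - (Z - extST sh P Z) * E := by rw [← (hcomm E).eq, ← mul_assoc, hT]; noncomm_ring
      _ = extST sh P Z * E := by noncomm_ring
  calc W = W * ((1 + e * u) * P) := by rw [hP', mul_one]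
    _ = (W + W * e * u) * P := by noncomm_ring
    _ = extST sh P Z * E * P := by rw [key]

theorem extST_geom_mul_geom {Q : HST} (hQ : Q * (1 - embB (ι ℚ 0) * u) = 1) (Z : HST) :
    extST sh P (Z * Q) = extST sh P Z * (1 + embB (ι ℚ 0) * u) := by
  have hQ_eq : Z * Q = Z + Z * Q * embB (ι ℚ 0) * u :=
    calc Z * Q = Z * (Q * (1 - embB (ι ℚ 0) * u)) + Z * Q * embB (ι ℚ 0) * u := by noncomm_ring
      _ = Z + Z * Q * embB (ι ℚ 0) * u := by rw [hQ, mul_one]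
  have hV := congrArg (extST sh P) hQ_eq
  rw [extST_add_right, hu, hsh.extST_geom_mul_letter hu hcomm hP hP'] at hV
  generalize extST sh P (Z * Q) = V at hV ⊢
  generalize extST sh P Z = S at hV ⊢
  generalize embB (ι ℚ 0) = e at hV hP ⊢
  have hPu : P * u * (1 + e * u) = u := by
    rw [← (hcomm P).eq, mul_assoc, hP, mul_one]
  calc V = V * (1 + e * u) - V * e * u := by noncomm_ring
    _ = (S + V * e * P * u) * (1 + e * u) - V * e * u := by rw [← hV]
    _ = S * (1 + e * u) + V * e * (P * u * (1 + e * u)) - V * e * u := by noncomm_ring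
    _ = S * (1 + e * u) := by rw [hPu]; noncomm_ring

theorem extST_geom_mul_letter_mul_geom {Q : HST} (hQ : Q * (1 - embB (ι ℚ 0) * u) = 1)
    (Z : HST) (j : Fin 2) :
    extST sh P (Z * embB (ι ℚ j) * Q) = extST sh P Z * embB (ι ℚ j) := by
  rw [hsh.extST_geom_mul_geom hu hcomm hP hP' hQ, hsh.extST_geom_mul_letter hu hcomm hP hP',
    mul_assoc _ P, hP, mul_one]

end IsShuffle

theorem commute_C_X (F : HST) : Commute (C X) F :=
  commute_C_of_forall_commute (fun f => (commute_X f).symm) F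

theorem commute_neg_X (F : HST) : Commute (-X) F :=
  (commute_X F).symm.neg_left

theorem invOnePlusE0T_eq : invOnePlusE0T = C (mk ((-ι ℚ 0) ^ ·)) := by
  rw [invOnePlusE0T, mk_neg_one_pow_mul_pow, e0]

theorem one_add_embB_mul_C_X : 1 + embB (ι ℚ 0) * C X = C (1 - C (-ι ℚ 0) * X) := by
  simp [embB]

theorem invOnePlusE0T_mul : invOnePlusE0T * (1 + embB (ι ℚ 0) * C X) = 1 := by
  rw [invOnePlusE0T_eq, one_add_embB_mul_C_X, ← map_mul, mk_pow_mul_one_sub_C_mul_X, map_one]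

theorem mul_invOnePlusE0T : (1 + embB (ι ℚ 0) * C X) * invOnePlusE0T = 1 := by
  rw [invOnePlusE0T_eq, one_add_embB_mul_C_X, ← map_mul, one_sub_C_mul_X_mul_mk_pow, map_one]

theorem invOneMinusE0T_mul : invOneMinusE0T * (1 - embB (ι ℚ 0) * C X) = 1 := by
  rw [invOneMinusE0T, embB, ← map_mul, ← map_one C, ← map_sub, ← map_mul]
  exact congrArg C (mk_pow_mul_one_sub_C_mul_X _)

theorem invOneMinusE0S_eq : invOneMinusE0S = mk ((C (ι ℚ 0)) ^ ·) := by
  simp [invOneMinusE0S, e0]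

theorem invOneMinusE0S_mul : invOneMinusE0S * (1 + embB (ι ℚ 0) * -X) = 1 := by
  rw [invOneMinusE0S_eq, mul_neg, ← sub_eq_add_neg, embB, mk_pow_mul_one_sub_C_mul_X]

theorem mul_invOneMinusE0S : (1 + embB (ι ℚ 0) * -X) * invOneMinusE0S = 1 := by
  rw [invOneMinusE0S_eq, mul_neg, ← sub_eq_add_neg, embB, one_sub_C_mul_X_mul_mk_pow]

theorem invOnePlusE0S_mul : invOnePlusE0S * (1 - embB (ι ℚ 0) * -X) = 1 := by
  have hgeom : invOnePlusE0S = mk ((-C (ι ℚ 0)) ^ ·) := by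
    simp only [invOnePlusE0S, map_mul, map_pow, map_neg, map_one, mk_neg_one_pow_mul_pow, e0]
  have hfactor : 1 - embB (ι ℚ 0) * -X = 1 - C (-C (ι ℚ 0)) * X := by simp [embB]
  rw [hgeom, hfactor, mk_pow_mul_one_sub_C_mul_X]

theorem IsShuffle.sum_neg_one_pow_mul_extST {sh : H →ₗ[ℚ] H →ₗ[ℚ] H} (hsh : IsShuffle sh)
    (X Y : HST) (a b : Fin 2) (l : List (Fin 2)) :
    ∑ v ∈ range (l.length + 1), (-1 : HST) ^ v *
        extST sh (X * embB (ι ℚ a) * embB (word (l.take v)))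
          (Y * embB (ι ℚ b) * embB (word (l.drop v).reverse))
      = extST sh X (Y * embB (ι ℚ b) * embB (word l.reverse)) * embB (ι ℚ a)
        + (-1) ^ l.length * extST sh (X * embB (ι ℚ a) * embB (word l)) Y * embB (ι ℚ b) := by
  induction l generalizing X a with
  | nil =>
    simp only [List.length_nil, zero_add, sum_range_one, List.take_nil, List.drop_nil,
      List.reverse_nil, word_nil, embB_one, mul_one, pow_zero, one_mul]
    rw [hsh.extST_mul_letter_mul_letter, add_comm]
  | cons c l ih =>
    have hword (t : List (Fin 2)) : X * embB (ι ℚ a) * embB (word (c :: t)) =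
        X * embB (ι ℚ a) * embB (ι ℚ c) * embB (word t) := by
      rw [word_cons, embB_mul, ← mul_assoc]
    rw [sum_range_succ']
    simp only [List.length_cons, List.take_succ_cons, List.drop_succ_cons, hword, pow_succ,
      mul_neg_one, neg_mul, sum_neg_distrib]
    rw [ih]
    simp only [List.take_zero, List.drop_zero, pow_zero, one_mul, word_nil, embB_one, mul_one,
      List.reverse_cons, word_append_singleton, embB_mul, ← mul_assoc]
    rw [hsh.extST_mul_letter_mul_letter]
    abel

theorem stmt_6
    (sh : H →ₗ[ℚ] H →ₗ[ℚ] H)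
    (hOneL : ∀ l : List (Fin 2), sh (word []) (word l) = word l)
    (hOneR : ∀ l : List (Fin 2), sh (word l) (word []) = word l)
    (hRec : ∀ (l l' : List (Fin 2)) (i j : Fin 2),
      sh (word (l ++ [i])) (word (l' ++ [j])) =
        sh (word (l ++ [i])) (word l') * FreeAlgebra.ι ℚ j
        + sh (word l) (word (l' ++ [j])) * FreeAlgebra.ι ℚ i) :
    ∀ l : List (Fin 2),
      ∑ v ∈ Finset.range (l.length + 1),
        (-1 : HST) ^ v
          * extST sh (invOnePlusE0T * embB e1 * embB (word (l.take v)))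
              (invOneMinusE0S * embB e1 * embB (word ((l.drop v).reverse)))
      = extST sh invOnePlusE0T
          (invOneMinusE0S * embB e1 * embB (word l.reverse) * embB e1 * invOneMinusE0T)
        + (-1 : HST) ^ l.length
          * extST sh invOneMinusE0S
              (invOnePlusE0T * embB e1 * embB (word l) * embB e1 * invOnePlusE0S) := by
  intro l
  have hsh := IsShuffle.of_words hOneL hOneR hRec
  -- `t` is `C X` and `s` is `X`, so `1 - e₀ s = 1 + e₀ (-X)`
  have hT := hsh.extST_geom_mul_letter_mul_geom (extST_mul_C_X_right sh) commute_C_X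
    invOnePlusE0T_mul mul_invOnePlusE0T invOneMinusE0T_mul
  have hS := hsh.extST_geom_mul_letter_mul_geom (extST_mul_neg_X_right sh) commute_neg_X
    invOneMinusE0S_mul mul_invOneMinusE0S invOnePlusE0S_mul
  rw [e1, hsh.sum_neg_one_pow_mul_extST, hT, hS, hsh.extST_comm invOneMinusE0S,
    ← mul_assoc ((-1 : HST) ^ l.length)]
end
end
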